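/- arXiv:2103.04955 — 11 statements merged into one kernel-verified Lean document; each statement's English description precedes it below -/
import Mathlib

section
/- For the min-degree (α,β)-dynamics with any fair scheduler and with α ≥ 1, the sequence of graphs stabilizes: there exists a time t such that G(t') = G(t) for all t' ≥ t. Moreover, in the stabilized graph the edge set equals the edge set of the induced subgraph of G(0) on the α-core of G(0); the set of non-isolated vertices of the stabilized graph equals the α-core of G(0), and the isolated vertices form the (α−1)-crust of G(0). -/
/-- Degree of a vertex: cardinality of its neighborhood. -/
noncomputable def deg {V : Type*} (G : SimpleGraph V) (v : V) : ℕ :=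
  (G.neighborSet v).ncard

/-- Degree of a vertex within the induced subgraph on `S`. -/
noncomputable def degIn {V : Type*} (G : SimpleGraph V) (S : Set V) (v : V) : ℕ :=
  {w | w ∈ S ∧ G.Adj v w}.ncard

/-- The `k`-core of `G`: the union of all vertex sets all of whose members have
degree at least `k` within the induced subgraph. -/
def kCore {V : Type*} (G : SimpleGraph V) (k : ℕ) : Set V :=
  ⋃₀ {S : Set V | ∀ v ∈ S, k ≤ degIn G S v}

/-- the min-degree (α,β)-dynamics with a fair scheduler and α ≥ 1
stabilizes; the stabilized graph is the induced subgraph of `G 0` on its α-core,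
its non-isolated vertices form the α-core and its isolated vertices the (α−1)-crust. -/
theorem minDegreeDynamics_fair_stabilizes_to_core {V : Type*} [Fintype V]
    (G : ℕ → SimpleGraph V) (C : ℕ → Set (Sym2 V)) (α β : ℕ)
    (hα1 : 1 ≤ α) (hα : α ≤ Fintype.card V - 1) (hβ : Fintype.card V - 1 < β)
    (hCdistinct : ∀ t : ℕ, ∀ p ∈ C t, ¬ p.IsDiag)
    (hfair : ∀ u v : V, u ≠ v → ∀ t : ℕ, ∃ t' ≥ t, s(u, v) ∈ C t')
    (hdyn : ∀ t : ℕ, ∀ u v : V, s(u, v) ∈ C t →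
      ((G (t + 1)).Adj u v ↔ (G t).Adj u v ∧ α ≤ min (deg (G t) u) (deg (G t) v)))
    (hstay : ∀ t : ℕ, ∀ u v : V, s(u, v) ∉ C t →
      ((G (t + 1)).Adj u v ↔ (G t).Adj u v)) :
    ∃ t : ℕ, (∀ t' ≥ t, G t' = G t) ∧
      (∀ u v : V, (G t).Adj u v ↔
        ((G 0).Adj u v ∧ u ∈ kCore (G 0) α ∧ v ∈ kCore (G 0) α)) ∧
      {v : V | ∃ u, (G t).Adj v u} = kCore (G 0) α ∧
      {v : V | ∀ u, ¬ (G t).Adj v u} = (kCore (G 0) α)ᶜ := by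
  classical
  set K := kCore (G 0) α with hKdef
  -- edges only disappear
  have hmono : ∀ t, G (t + 1) ≤ G t := by
    intro t u v h
    by_cases hc : s(u, v) ∈ C t
    · exact ((hdyn t u v hc).mp h).1
    · exact (hstay t u v hc).mp h
  have hle : ∀ s t : ℕ, s ≤ t → G t ≤ G s := by
    intro s t h
    induction h with
    | refl => exact le_refl _
    | step h ih => exact le_trans (hmono _) ih
  -- the α-core has min degree α inside itself
  have hKdeg : ∀ v ∈ K, α ≤ degIn (G 0) K v := by
    intro v hv
    obtain ⟨S, hS, hvS⟩ := hv
    have hSK : S ⊆ K := Set.subset_sUnion_of_mem hS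
    refine le_trans (hS v hvS) (Set.ncard_le_ncard ?_ (Set.toFinite _))
    rintro w ⟨hw1, hw2⟩
    exact ⟨hSK hw1, hw2⟩
  -- core edges persist forever
  have hpersist : ∀ t : ℕ, ∀ u v : V, u ∈ K → v ∈ K → (G 0).Adj u v → (G t).Adj u v := by
    intro t
    induction t with
    | zero => intro u v _ _ h; exact h
    | succ t ih =>
      have hdegLB : ∀ u ∈ K, α ≤ deg (G t) u := by
        intro u hu
        refine le_trans (hKdeg u hu) (Set.ncard_le_ncard ?_ (Set.toFinite _))
        rintro w ⟨hw1, hw2⟩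
        exact ih u w hu hw1 hw2
      intro u v hu hv h0
      by_cases hc : s(u, v) ∈ C t
      · exact (hdyn t u v hc).mpr ⟨ih u v hu hv h0, le_min (hdegLB u hu) (hdegLB v hv)⟩
      · exact (hstay t u v hc).mpr (ih u v hu hv h0)
  -- stabilization via the decreasing edge count
  set N : ℕ → ℕ := fun t => (G t).edgeSet.ncard with hNdef
  have hNanti : ∀ s t : ℕ, s ≤ t → N t ≤ N s := by
    intro s t h
    exact Set.ncard_le_ncard (SimpleGraph.edgeSet_mono (hle s t h)) (Set.toFinite _)
  have hrange : (Set.range N).Nonempty := ⟨N 0, 0, rfl⟩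
  obtain ⟨t, htmin⟩ : ∃ t, N t = sInf (Set.range N) := Nat.sInf_mem hrange
  have hmin : ∀ s, N t ≤ N s := by
    intro s
    rw [htmin]
    exact Nat.sInf_le ⟨s, rfl⟩
  have hstab : ∀ t' ≥ t, G t' = G t := by
    intro t' h
    have h1 : (G t').edgeSet ⊆ (G t).edgeSet := SimpleGraph.edgeSet_mono (hle t t' h)
    have h2 : (G t).edgeSet.ncard ≤ (G t').edgeSet.ncard := hmin t'
    have := Set.eq_of_subset_of_ncard_le h1 h2 (Set.toFinite _)
    exact SimpleGraph.edgeSet_inj.mp this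
  -- at the stable time, any surviving edge forces degree ≥ α at both ends
  have hdegstable : ∀ v u : V, (G t).Adj v u → α ≤ deg (G t) v := by
    intro v u h
    obtain ⟨t', ht', hc⟩ := hfair v u h.ne t
    have e1 : G t' = G t := hstab t' ht'
    have e2 : G (t' + 1) = G t := hstab (t' + 1) (le_trans ht' (Nat.le_succ _))
    have hiff := hdyn t' v u hc
    rw [e1, e2] at hiff
    exact (le_min_iff.mp (hiff.mp h).2).1
  -- the non-isolated vertices are contained in the core
  have hSfam : {v : V | ∃ u, (G t).Adj v u} ∈ {S : Set V | ∀ v ∈ S, α ≤ degIn (G 0) S v} := by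
    rintro v ⟨u, hadj⟩
    refine le_trans (hdegstable v u hadj) (Set.ncard_le_ncard ?_ (Set.toFinite _))
    intro w hw
    exact ⟨⟨v, ((hw : (G t).Adj v w)).symm⟩, hle 0 t (Nat.zero_le t) hw⟩
  have hSK : {v : V | ∃ u, (G t).Adj v u} ⊆ K := Set.subset_sUnion_of_mem hSfam
  -- edge characterization
  have hchar : ∀ u v : V, (G t).Adj u v ↔ ((G 0).Adj u v ∧ u ∈ K ∧ v ∈ K) := by
    intro u v
    constructor
    · intro h
      exact ⟨hle 0 t (Nat.zero_le t) h, hSK ⟨v, h⟩, hSK ⟨u, h.symm⟩⟩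
    · rintro ⟨h0, hu, hv⟩
      exact hpersist t u v hu hv h0
  have hSeq : {v : V | ∃ u, (G t).Adj v u} = K := by
    apply Set.Subset.antisymm hSK
    intro v hv
    have h1 : α ≤ degIn (G 0) K v := hKdeg v hv
    have hne : {w | w ∈ K ∧ (G 0).Adj v w}.Nonempty := by
      apply Set.nonempty_of_ncard_ne_zero
      intro h0
      rw [degIn] at h1
      omega
    obtain ⟨w, hwK, hwa⟩ := hne
    exact ⟨w, hpersist t v w hv hwK hwa⟩
  refine ⟨t, hstab, hchar, hSeq, ?_⟩
  ext v
  simp only [Set.mem_setOf_eq, Set.mem_compl_iff, ← hSeq, Set.mem_setOf_eq, not_exists]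
end

section
/- Let S_0 = V and let S_0 ⊋ S_1 ⊋ … ⊋ S_m be a sequence of vertex subsets in which each S_{i+1} = S_i \ {v_i} for some vertex v_i whose degree in the induced subgraph G[S_i] is less than k, and in which every vertex of the final induced subgraph G[S_m] has degree at least k within G[S_m]. Then, regardless of the order in which vertices are deleted, S_m equals the k-core of G. -/
lemma degIn_mono {V : Type*} [Fintype V] (G : SimpleGraph V) {S T : Set V}
    (h : S ⊆ T) (v : V) : degIn G S v ≤ degIn G T v :=
  Set.ncard_le_ncard (fun w hw => ⟨h hw.1, hw.2⟩) (Set.toFinite _)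

lemma kCore_spec {V : Type*} [Fintype V] (G : SimpleGraph V) (k : ℕ) :
    ∀ v ∈ kCore G k, k ≤ degIn G (kCore G k) v := by
  rintro v ⟨T, hT, hvT⟩
  exact le_trans (hT v hvT) (degIn_mono G (Set.subset_sUnion_of_mem hT) v)

/-- repeatedly deleting single vertices of induced degree < k,
until all remaining vertices have induced degree at least k, always yields the
k-core of `G`, regardless of the deletion order. -/
theorem vertex_deletion_process_computes_kCore {V : Type*} [Fintype V]
    (G : SimpleGraph V) (k : ℕ) (hk : 1 ≤ k)
    (S : ℕ → Set V) (m : ℕ) (h0 : S 0 = Set.univ)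
    (hstep : ∀ i < m, ∃ v ∈ S i, degIn G (S i) v < k ∧ S (i + 1) = S i \ {v})
    (hfinal : ∀ v ∈ S m, k ≤ degIn G (S m) v) :
    S m = kCore G k := by
  apply le_antisymm
  · exact Set.subset_sUnion_of_mem hfinal
  · have key : ∀ i ≤ m, kCore G k ⊆ S i := by
      intro i
      induction i with
      | zero => intro _; rw [h0]; exact fun _ _ => Set.mem_univ _
      | succ n ih =>
        intro hn w hw
        obtain ⟨v, hv, hdeg, heq⟩ := hstep n (by omega)
        have hsub := ih (by omega)
        rw [heq]
        refine ⟨hsub hw, ?_⟩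
        intro hwv
        simp only [Set.mem_singleton_iff] at hwv
        subst hwv
        exact absurd (le_trans (kCore_spec G k w hw) (degIn_mono G hsub w))
          (not_le.mpr hdeg)
    exact key m le_rfl
end

section
/- In the degree dynamics, for every t ≥ 1 and all vertices u, w: if deg_{G(t)}(u) ≥ deg_{G(t)}(w) then deg_{G(t+1)}(u) ≥ deg_{G(t+1)}(w). -/
/-- in the degree dynamics (α = β, all pairs scheduled, proper f),
the relative order of degrees is preserved from each time t ≥ 1 to time t+1. -/
theorem degreeDynamics_degree_order_preserved {V : Type*} [Fintype V]
    (f : ℕ → ℕ → ℝ)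
    (hsym : ∀ x y, f x y = f y x)
    (hmono : ∀ x₁ x₂ y₁ y₂ : ℕ, x₁ ≤ x₂ → y₁ ≤ y₂ → f x₁ y₁ ≤ f x₂ y₂)
    (β : ℝ) (G : ℕ → SimpleGraph V)
    (hdyn : ∀ t : ℕ, ∀ u v : V, u ≠ v →
      ((G (t + 1)).Adj u v ↔ β ≤ f (deg (G t) u) (deg (G t) v))) :
    ∀ t ≥ 1, ∀ u w : V,
      deg (G t) w ≤ deg (G t) u → deg (G (t + 1)) w ≤ deg (G (t + 1)) u := by
  intro t _ u w hle
  unfold deg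
  classical
  set φ : V → V := fun v => if v = u then w else v with hφ
  apply Set.ncard_le_ncard_of_injOn φ
  · intro v hv
    simp only [SimpleGraph.mem_neighborSet] at hv ⊢
    have hwv : w ≠ v := hv.ne
    have hbwv : β ≤ f (deg (G t) w) (deg (G t) v) := (hdyn t w v hwv).mp hv
    by_cases hvu : v = u
    · simp only [hφ, if_pos hvu]
      subst hvu
      exact (hdyn t v w hwv.symm).mpr (by rw [hsym]; exact hbwv)
    · simp only [hφ, if_neg hvu]
      refine (hdyn t u v (Ne.symm hvu)).mpr ?_
      exact le_trans hbwv (hmono _ _ _ _ hle le_rfl)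
  · intro a ha b hb hab
    simp only [SimpleGraph.mem_neighborSet] at ha hb
    by_cases hau : a = u <;> by_cases hbu : b = u
    · rw [hau, hbu]
    · rw [hφ] at hab; simp only [if_pos hau, if_neg hbu] at hab
      exact absurd (hab ▸ hb) (G (t+1)).irrefl
    · rw [hφ] at hab; simp only [if_pos hbu, if_neg hau] at hab
      exact absurd (hab ▸ ha) (G (t+1)).irrefl
    · rw [hφ] at hab; simpa only [if_neg hau, if_neg hbu] using hab
end

section
/- In the degree dynamics, for every t, the number of distinct vertex degrees in G(t+1) is at most the number of distinct vertex degrees in G(t); that is, |G(t+1)| ≤ |G(t)|. -/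
/-- Number of distinct vertex degrees of a graph. -/
noncomputable def numDeg {V : Type*} (G : SimpleGraph V) : ℕ :=
  (Set.range (deg G)).ncard

/-- in the degree dynamics, the number of distinct vertex degrees
never increases from one step to the next. -/
theorem degreeDynamics_numDeg_nonincreasing {V : Type*} [Fintype V]
    (f : ℕ → ℕ → ℝ)
    (hsym : ∀ x y, f x y = f y x)
    (hmono : ∀ x₁ x₂ y₁ y₂ : ℕ, x₁ ≤ x₂ → y₁ ≤ y₂ → f x₁ y₁ ≤ f x₂ y₂)
    (β : ℝ) (G : ℕ → SimpleGraph V)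
    (hdyn : ∀ t : ℕ, ∀ u v : V, u ≠ v →
      ((G (t + 1)).Adj u v ↔ β ≤ f (deg (G t) u) (deg (G t) v))) :
    ∀ t : ℕ, numDeg (G (t + 1)) ≤ numDeg (G t) := by
  classical
  intro t
  set D : V → ℕ := deg (G t) with hD
  set D' : V → ℕ := deg (G (t + 1)) with hD'
  -- key: equal degrees at time t give equal degrees at time t+1
  have key : ∀ u v : V, D u = D v → D' u = D' v := by
    intro u v huv
    by_cases hne : u = v
    · rw [hne]
    · set S : Set V := {w | β ≤ f (D u) (D w)} with hS
      have hNu : (G (t + 1)).neighborSet u = S \ {u} := by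
        ext w
        simp only [SimpleGraph.mem_neighborSet, Set.mem_diff, Set.mem_singleton_iff,
          hS, Set.mem_setOf_eq]
        constructor
        · intro h
          have hwu : u ≠ w := (G (t + 1)).ne_of_adj h
          exact ⟨(hdyn t u w hwu).mp h, fun hw => hwu hw.symm⟩
        · intro ⟨h1, h2⟩
          exact (hdyn t u w (fun h => h2 h.symm)).mpr h1
      have hNv : (G (t + 1)).neighborSet v = S \ {v} := by
        ext w
        simp only [SimpleGraph.mem_neighborSet, Set.mem_diff, Set.mem_singleton_iff,
          hS, Set.mem_setOf_eq, huv]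
        constructor
        · intro h
          have hwv : v ≠ w := (G (t + 1)).ne_of_adj h
          exact ⟨(hdyn t v w hwv).mp h, fun hw => hwv hw.symm⟩
        · intro ⟨h1, h2⟩
          exact (hdyn t v w (fun h => h2 h.symm)).mpr h1
      have hmem : u ∈ S ↔ v ∈ S := by
        simp only [hS, Set.mem_setOf_eq, huv]
      -- swap u v maps S \ {u} bijectively onto S \ {v}
      have himg : (Equiv.swap u v) '' (S \ {u}) = S \ {v} := by
        ext w
        constructor
        · rintro ⟨x, ⟨hxS, hxu⟩, rfl⟩
          by_cases hxv : x = v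
          · subst hxv
            rw [Equiv.swap_apply_right]
            exact ⟨hmem.mpr hxS, hne⟩
          · rw [Equiv.swap_apply_of_ne_of_ne hxu hxv]
            exact ⟨hxS, hxv⟩
        · rintro ⟨hwS, hwv⟩
          by_cases hwu : w = u
          · refine ⟨v, ⟨hmem.mp (hwu ▸ hwS), fun h => hne h.symm⟩, ?_⟩
            rw [Equiv.swap_apply_right, hwu]
          · exact ⟨w, ⟨hwS, hwu⟩, Equiv.swap_apply_of_ne_of_ne hwu hwv⟩
      have hu' : D' u = (S \ {u}).ncard := by
        simp only [hD', deg, hNu]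
      have hv' : D' v = (S \ {v}).ncard := by
        simp only [hD', deg, hNv]
      rw [hu', hv', ← himg, Set.ncard_image_of_injective _ (Equiv.swap u v).injective]
  -- factor D' through D
  let h : ℕ → ℕ := fun n => if hn : ∃ u, D u = n then D' hn.choose else 0
  have hfac : ∀ u, D' u = h (D u) := by
    intro u
    have hex : ∃ w, D w = D u := ⟨u, rfl⟩
    simp only [h, dif_pos hex]
    exact key u hex.choose (hex.choose_spec).symm
  have hsub : Set.range D' ⊆ h '' Set.range D := by
    rintro n ⟨u, rfl⟩
    exact ⟨D u, ⟨u, rfl⟩, (hfac u).symm⟩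
  have hfin : (Set.range D).Finite := Set.finite_range D
  calc numDeg (G (t + 1)) = (Set.range D').ncard := rfl
    _ ≤ (h '' Set.range D).ncard := Set.ncard_le_ncard hsub (hfin.image h)
    _ ≤ (Set.range D).ncard := Set.ncard_image_le hfin
    _ = numDeg (G t) := rfl
end

section
/- In the degree dynamics, if the number of distinct vertex degrees in G(t+1) equals the number of distinct vertex degrees in G(t), then for every i, the set of vertices having the i-th largest distinct degree in G(t) has the same cardinality as the set of vertices having the i-th largest distinct degree in G(t+1); that is, |R_i(t)| = |R_i(t+1)| for all i. -/
/-- The i-th largest distinct vertex degree of a graph (0-indexed; 0 if out of range). -/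
noncomputable def nthLargestDeg {V : Type*} [Fintype V] (G : SimpleGraph V) (i : ℕ) : ℕ :=
  (((Finset.univ.image (deg G)).sort (· ≤ ·)).reverse).getD i 0

open Finset in
/-- For `x ∈ s` and `i < s.card`, `x` is the `i`-th largest element of `s` iff exactly `i`
elements of `s` are greater than `x`. -/
lemma rank_char (s : Finset ℕ) (i : ℕ) (hi : i < s.card) (x : ℕ) (hx : x ∈ s) :
    ((s.sort (· ≤ ·)).reverse.getD i 0 = x) ↔ (s.filter (fun y => x < y)).card = i := by
  set L : List ℕ := (s.sort (· ≤ ·)).reverse with hL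
  have hlen : L.length = s.card := by simp [hL, Finset.length_sort]
  have hiL : i < L.length := hlen ▸ hi
  have hsorted : L.Pairwise (· > ·) := List.pairwise_reverse.2 (s.sortedLT_sort.pairwise)
  have hmemL : ∀ y, y ∈ L ↔ y ∈ s := by
    intro y; simp [hL, Finset.mem_sort]
  -- forward: rank of L.get j equals j
  have hrank : ∀ j : Fin L.length, (s.filter (fun y => L.get j < y)).card = (j : ℕ) := by
    intro j
    apply Finset.card_eq_of_bijective (fun k hk => L.get ⟨k, hk.trans j.2⟩)
    · intro y hy
      simp only [Finset.mem_filter] at hy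
      obtain ⟨k, hk⟩ := List.mem_iff_get.1 ((hmemL y).2 hy.1)
      refine ⟨k, ?_, by simpa using hk⟩
      by_contra h
      push_neg at h
      rcases lt_or_eq_of_le h with h' | h'
      · exact absurd (hsorted.rel_get_of_lt h') (by rw [hk]; exact not_lt_of_gt hy.2)
      · have : L.get j = y := by rw [← hk]; exact congrArg L.get (Fin.ext h')
        exact absurd hy.2 (by rw [this]; exact lt_irrefl y)
    · intro k hk
      refine Finset.mem_filter.2 ⟨(hmemL _).1 (L.get_mem _), ?_⟩
      exact hsorted.rel_get_of_lt (show (⟨k, hk.trans j.2⟩ : Fin L.length) < j from hk)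
    · intro k l hk hl h
      have hnd : L.Nodup := List.nodup_reverse.2 (s.sort_nodup _)
      have := List.nodup_iff_injective_get.1 hnd h
      exact congrArg Fin.val this
  -- rank is injective on s
  have hrinj : ∀ a ∈ s, ∀ b ∈ s,
      (s.filter (fun y => a < y)).card = (s.filter (fun y => b < y)).card → a = b := by
    intro a ha b hb hab
    by_contra hne
    wlog hab' : a < b generalizing a b
    · exact this b hb a ha hab.symm (Ne.symm hne)
        (lt_of_le_of_ne (not_lt.1 hab') (Ne.symm hne))
    have hsub : s.filter (fun y => b < y) ⊆ s.filter (fun y => a < y) := by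
      intro y hy; simp only [Finset.mem_filter] at *; exact ⟨hy.1, hab'.trans hy.2⟩
    have hmemb : b ∈ s.filter (fun y => a < y) := Finset.mem_filter.2 ⟨hb, hab'⟩
    have : (s.filter (fun y => b < y)).card < (s.filter (fun y => a < y)).card :=
      Finset.card_lt_card (Finset.ssubset_iff_of_subset hsub |>.2 ⟨b, hmemb, by simp⟩)
    omega
  have hgetD : L.getD i 0 = L.get ⟨i, hiL⟩ := List.getD_eq_getElem _ _ hiL
  constructor
  · rintro rfl
    rw [hgetD]
    exact hrank ⟨i, hiL⟩
  · intro hr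
    rw [hgetD]
    exact hrinj _ ((hmemL _).1 (L.get_mem _)) _ hx ((hrank ⟨i, hiL⟩).trans hr.symm)

/-- One step of the degree dynamics is monotone in degrees. -/
lemma deg_step_mono {V : Type*} [Fintype V]
    (f : ℕ → ℕ → ℝ)
    (hmono : ∀ x₁ x₂ y₁ y₂ : ℕ, x₁ ≤ x₂ → y₁ ≤ y₂ → f x₁ y₁ ≤ f x₂ y₂)
    (β : ℝ) (G : ℕ → SimpleGraph V)
    (hdyn : ∀ t : ℕ, ∀ u v : V, u ≠ v →
      ((G (t + 1)).Adj u v ↔ β ≤ f (deg (G t) u) (deg (G t) v)))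
    (t : ℕ) (u v : V) (h : deg (G t) u ≤ deg (G t) v) :
    deg (G (t + 1)) u ≤ deg (G (t + 1)) v := by
  classical
  by_cases huv : u = v
  · subst huv; exact le_rfl
  apply Set.ncard_le_ncard_of_injOn (fun w => if w = v then u else w)
  · intro w hw
    simp only [SimpleGraph.mem_neighborSet] at hw ⊢
    by_cases hwv : w = v
    · subst hwv
      simpa using hw.symm
    · simp only [if_neg hwv]
      have h1 : β ≤ f (deg (G t) u) (deg (G t) w) := (hdyn t u w hw.ne).1 hw
      have h2 : f (deg (G t) u) (deg (G t) w) ≤ f (deg (G t) v) (deg (G t) w) :=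
        hmono _ _ _ _ h le_rfl
      exact (hdyn t v w (fun hvw => hwv hvw.symm)).2 (h1.trans h2)
  · intro a ha b hb hab
    simp only [SimpleGraph.mem_neighborSet] at ha hb
    by_cases hav : a = v <;> by_cases hbv : b = v
    · rw [hav, hbv]
    · simp only [if_pos hav, if_neg hbv] at hab
      exact absurd hab.symm hb.ne'
    · simp only [if_neg hav, if_pos hbv] at hab
      exact absurd hab ha.ne'
    · simpa [if_neg hav, if_neg hbv] using hab

/-- in the degree dynamics, if the number of distinct degrees is the same
at times t and t+1, then for every i, the class of vertices having the i-th largest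
distinct degree has the same cardinality at times t and t+1. -/
theorem degreeDynamics_equal_numDeg_preserves_class_sizes {V : Type*} [Fintype V]
    (f : ℕ → ℕ → ℝ)
    (hsym : ∀ x y, f x y = f y x)
    (hmono : ∀ x₁ x₂ y₁ y₂ : ℕ, x₁ ≤ x₂ → y₁ ≤ y₂ → f x₁ y₁ ≤ f x₂ y₂)
    (β : ℝ) (G : ℕ → SimpleGraph V)
    (hdyn : ∀ t : ℕ, ∀ u v : V, u ≠ v →
      ((G (t + 1)).Adj u v ↔ β ≤ f (deg (G t) u) (deg (G t) v))) :
    ∀ t : ℕ, numDeg (G (t + 1)) = numDeg (G t) →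
      ∀ i < numDeg (G t),
        {v : V | deg (G t) v = nthLargestDeg (G t) i}.ncard =
          {v : V | deg (G (t + 1)) v = nthLargestDeg (G (t + 1)) i}.ncard := by
  classical
  intro t hnum i hi
  set d : V → ℕ := deg (G t) with hd
  set d' : V → ℕ := deg (G (t + 1)) with hd'
  set s : Finset ℕ := Finset.univ.image d with hs
  set s' : Finset ℕ := Finset.univ.image d' with hs'
  have hnum_eq : ∀ H : SimpleGraph V, numDeg H = (Finset.univ.image (deg H)).card := by
    intro H
    rw [numDeg, ← Set.ncard_coe_finset]
    congr 1
    ext x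
    simp [Set.mem_range, eq_comm]
  have hi' : i < s.card := by rw [hs, ← hnum_eq]; exact hi
  have hcard : s'.card = s.card := by
    rw [hs, hs', ← hnum_eq, ← hnum_eq]; exact hnum
  have hmonostep : ∀ u v : V, d u ≤ d v → d' u ≤ d' v := fun u v h =>
    deg_step_mono f hmono β G hdyn t u v h
  have heqstep : ∀ u v : V, d u = d v → d' u = d' v := fun u v h =>
    le_antisymm (hmonostep _ _ h.le) (hmonostep _ _ h.ge)
  -- the induced map on degree values
  set ψ : ℕ → ℕ := fun x => if h : ∃ v : V, d v = x then d' h.choose else 0 with hψdef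
  have hψ : ∀ v : V, ψ (d v) = d' v := by
    intro v
    have h : ∃ w : V, d w = d v := ⟨v, rfl⟩
    simp only [hψdef, dif_pos h]
    exact heqstep _ _ h.choose_spec
  have himg : s.image ψ = s' := by
    rw [hs, hs', Finset.image_image]
    exact Finset.image_congr (fun v _ => hψ v)
  have hinj : Set.InjOn ψ ↑s :=
    Finset.injOn_of_card_image_eq (by rw [himg, hcard])
  have hsmono : ∀ a ∈ s, ∀ b ∈ s, a < b → ψ a < ψ b := by
    intro a ha b hb hab
    obtain ⟨u, -, rfl⟩ := Finset.mem_image.1 ha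
    obtain ⟨w, -, rfl⟩ := Finset.mem_image.1 hb
    have hle : ψ (d u) ≤ ψ (d w) := by
      rw [hψ u, hψ w]; exact hmonostep u w hab.le
    exact lt_of_le_of_ne hle (fun h => absurd (hinj ha hb h) hab.ne)
  have hdvmem : ∀ v : V, d v ∈ s := fun v =>
    Finset.mem_image.2 ⟨v, Finset.mem_univ v, rfl⟩
  have hdvmem' : ∀ v : V, d' v ∈ s' := fun v =>
    Finset.mem_image.2 ⟨v, Finset.mem_univ v, rfl⟩
  -- ranks are preserved
  have hrank : ∀ v : V,
      (s'.filter (fun y => d' v < y)).card = (s.filter (fun y => d v < y)).card := by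
    intro v
    have hset : s'.filter (fun y => d' v < y) = (s.filter (fun y => d v < y)).image ψ := by
      ext z
      simp only [Finset.mem_filter, Finset.mem_image]
      constructor
      · rintro ⟨hz, hlt⟩
        rw [← himg] at hz
        obtain ⟨y, hy, rfl⟩ := Finset.mem_image.1 hz
        refine ⟨y, ⟨hy, ?_⟩, rfl⟩
        by_contra hcon
        push_neg at hcon
        rcases lt_or_eq_of_le hcon with h' | h'
        · exact absurd (hsmono _ hy _ (hdvmem v) h')
            (not_lt_of_gt (by rw [hψ v] at *; exact hlt))
        · rw [h', hψ v] at hlt; exact lt_irrefl _ hlt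
      · rintro ⟨y, ⟨hy, hlt⟩, rfl⟩
        refine ⟨himg ▸ Finset.mem_image_of_mem ψ hy, ?_⟩
        rw [← hψ v]
        exact hsmono _ (hdvmem v) _ hy hlt
    rw [hset]
    exact Finset.card_image_of_injOn
      (hinj.mono (Finset.coe_subset.2 (Finset.filter_subset _ _)))
  -- the two classes coincide as sets
  have hi'' : i < s'.card := by rw [hcard]; exact hi'
  have hsets : {v : V | d v = nthLargestDeg (G t) i} =
      {v : V | d' v = nthLargestDeg (G (t + 1)) i} := by
    ext v
    simp only [Set.mem_setOf_eq]
    have key_t : d v = nthLargestDeg (G t) i ↔ (s.filter (fun y => d v < y)).card = i := by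
      rw [eq_comm]
      exact rank_char s i hi' (d v) (hdvmem v)
    have key_t1 : d' v = nthLargestDeg (G (t + 1)) i ↔
        (s'.filter (fun y => d' v < y)).card = i := by
      rw [eq_comm]
      exact rank_char s' i hi'' (d' v) (hdvmem' v)
    rw [key_t, key_t1, hrank v]
  rw [hsets]
end

section
/- In the degree dynamics, for every t ≥ 1: if u is adjacent to w in G(t), and x is any vertex with x ≠ u and deg_{G(t)}(x) ≥ deg_{G(t)}(w), then u is adjacent to x in G(t). (Equivalently: if a node u in some equivalence class is connected with some node w in class R_j(t), then u is connected with every node of every class R_k(t) with k ≤ j.) -/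
/-- in the degree dynamics, for t ≥ 1, if u is adjacent to w then u
is adjacent to every other vertex x ≠ u whose degree is at least that of w. -/
theorem degreeDynamics_adjacency_monotone_in_degree {V : Type*} [Fintype V]
    (f : ℕ → ℕ → ℝ)
    (hsym : ∀ x y, f x y = f y x)
    (hmono : ∀ x₁ x₂ y₁ y₂ : ℕ, x₁ ≤ x₂ → y₁ ≤ y₂ → f x₁ y₁ ≤ f x₂ y₂)
    (β : ℝ) (G : ℕ → SimpleGraph V)
    (hdyn : ∀ t : ℕ, ∀ u v : V, u ≠ v →
      ((G (t + 1)).Adj u v ↔ β ≤ f (deg (G t) u) (deg (G t) v))) :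
    ∀ t ≥ 1, ∀ u w x : V, (G t).Adj u w → x ≠ u →
      deg (G t) w ≤ deg (G t) x → (G t).Adj u x := by
  intro t ht u w x huw hxu hdeg
  obtain ⟨s, rfl⟩ : ∃ s, t = s + 1 := ⟨t - 1, (Nat.succ_pred_eq_of_pos ht).symm⟩
  set d := deg (G s) with hd
  have hadj : ∀ a b : V, a ≠ b → ((G (s+1)).Adj a b ↔ β ≤ f (d a) (d b)) := hdyn s
  by_cases hdw : d w ≤ d x
  · have huw' := (hadj u w huw.ne).mp huw
    exact (hadj u x (Ne.symm hxu)).mpr (le_trans huw' (hmono _ _ _ _ le_rfl hdw))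
  · push_neg at hdw
    have hsub : (G (s+1)).neighborSet x \ {w} ⊆ (G (s+1)).neighborSet w \ {x} := by
      rintro v ⟨hv, hvw⟩
      simp only [Set.mem_singleton_iff] at hvw
      have hv' : (G (s+1)).Adj x v := hv
      have h1 : β ≤ f (d x) (d v) := (hadj x v hv'.ne).mp hv'
      have h2 : β ≤ f (d w) (d v) := le_trans h1 (hmono _ _ _ _ hdw.le le_rfl)
      refine ⟨(hadj w v (Ne.symm hvw)).mpr h2, ?_⟩
      simp only [Set.mem_singleton_iff]
      exact hv'.ne'
    have hiff : w ∈ (G (s+1)).neighborSet x ↔ x ∈ (G (s+1)).neighborSet w := by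
      simp [SimpleGraph.mem_neighborSet, SimpleGraph.adj_comm]
    have hdeg' : ((G (s+1)).neighborSet w).ncard ≤ ((G (s+1)).neighborSet x).ncard := hdeg
    have heq : (G (s+1)).neighborSet x \ {w} = (G (s+1)).neighborSet w \ {x} := by
      by_cases hmem : w ∈ (G (s+1)).neighborSet x
      · have hmem' : x ∈ (G (s+1)).neighborSet w := hiff.mp hmem
        have e1 : ((G (s+1)).neighborSet x \ {w}).ncard
            = ((G (s+1)).neighborSet x).ncard - 1 :=
          Set.ncard_diff_singleton_of_mem hmem
        have e2 : ((G (s+1)).neighborSet w \ {x}).ncard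
            = ((G (s+1)).neighborSet w).ncard - 1 :=
          Set.ncard_diff_singleton_of_mem hmem'
        refine Set.eq_of_subset_of_ncard_le hsub ?_ (Set.toFinite _)
        rw [e1, e2]
        exact Nat.sub_le_sub_right hdeg' 1
      · have hmem' : x ∉ (G (s+1)).neighborSet w := fun h => hmem (hiff.mpr h)
        have e1 : (G (s+1)).neighborSet x \ {w} = (G (s+1)).neighborSet x :=
          Set.diff_singleton_eq_self hmem
        have e2 : (G (s+1)).neighborSet w \ {x} = (G (s+1)).neighborSet w :=
          Set.diff_singleton_eq_self hmem'
        refine Set.eq_of_subset_of_ncard_le hsub ?_ (Set.toFinite _)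
        rw [e1, e2]
        exact hdeg'
    have hu : u ∈ (G (s+1)).neighborSet w \ {x} := by
      refine ⟨huw.symm, ?_⟩
      simp only [Set.mem_singleton_iff]
      exact Ne.symm hxu
    rw [← heq] at hu
    exact hu.1.symm
end

section
/- Suppose that in the degree dynamics there is a time c such that for every t ≥ c the maximum vertex degree of G(t) equals n−1. Let R be the set of vertices of degree n−1 in G(c) and let r = |R|. Then: (i) for every t ≥ c, every vertex of R has degree n−1 in G(t) (so R-vertices are adjacent to all other vertices at all times t ≥ c); (ii) the function g(x,y) = f(x+r, y+r) is proper, and for every t ≥ c and all distinct u, v ∈ V \ R, the pair {u,v} is an edge of G(t+1) if and only if g(d_u, d_v) ≥ β, where d_u, d_v are the degrees of u and v in the induced subgraph of G(t) on V \ R; hence the induced subgraphs G(t)[V \ R], t ≥ c, evolve exactly by the degree dynamics with potential g and threshold β. Consequently, if that induced dynamics started from G(c)[V \ R] stabilizes after k steps, then G(t) = G(c+k) for all t ≥ c+k. -/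
lemma ncard_compl_singleton {V : Type*} [Fintype V] (u : V) :
    ({u}ᶜ : Set V).ncard = Fintype.card V - 1 := by
  have h := Set.ncard_add_ncard_compl ({u} : Set V) (Set.toFinite _) (Set.toFinite _)
  rw [Set.ncard_singleton, Nat.card_eq_fintype_card] at h
  omega

lemma neighborSet_subset {V : Type*} (G : SimpleGraph V) (u : V) :
    G.neighborSet u ⊆ {u}ᶜ := by
  intro v hv
  simp only [Set.mem_compl_iff, Set.mem_singleton_iff]
  rintro rfl
  exact G.irrefl hv

lemma deg_le {V : Type*} [Fintype V] (G : SimpleGraph V) (u : V) :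
    deg G u ≤ Fintype.card V - 1 := by
  rw [deg, ← ncard_compl_singleton u]
  exact Set.ncard_le_ncard (neighborSet_subset G u) (Set.toFinite _)

lemma deg_eq_iff {V : Type*} [Fintype V] (G : SimpleGraph V) (u : V) :
    deg G u = Fintype.card V - 1 ↔ ∀ v, v ≠ u → G.Adj u v := by
  constructor
  · intro h v hv
    have heq : G.neighborSet u = {u}ᶜ := by
      apply Set.eq_of_subset_of_ncard_le (neighborSet_subset G u) _ (Set.toFinite _)
      rw [ncard_compl_singleton u]
      exact h.ge
    have : v ∈ G.neighborSet u := by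
      rw [heq]; simpa using hv
    exact this
  · intro h
    have heq : G.neighborSet u = {u}ᶜ := by
      refine subset_antisymm (neighborSet_subset G u) ?_
      intro v hv
      exact h v (by simpa using hv)
    rw [deg, heq, ncard_compl_singleton]

lemma deg_decomp {V : Type*} [Fintype V] (G : SimpleGraph V) (R : Set V) (u : V)
    (hu : u ∉ R) (hadj : ∀ w ∈ R, G.Adj u w) :
    deg G u = degIn G Rᶜ u + R.ncard := by
  have heq : G.neighborSet u = {w | w ∈ Rᶜ ∧ G.Adj u w} ∪ R := by
    ext w
    constructor
    · intro hw
      by_cases hwR : w ∈ R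
      · exact Or.inr hwR
      · exact Or.inl ⟨hwR, hw⟩
    · rintro (⟨-, hw⟩ | hw)
      · exact hw
      · exact hadj w hw
  have hdisj : Disjoint {w | w ∈ Rᶜ ∧ G.Adj u w} R := by
    rw [Set.disjoint_left]
    rintro w ⟨hw, -⟩
    exact hw
  rw [deg, heq, Set.ncard_union_eq hdisj (Set.toFinite _) (Set.toFinite _), degIn]

/-- renormalization, top class: if from time c on the maximum degree
is always n−1, then (i) the vertices of degree n−1 at time c keep degree n−1 forever;
(ii) g(x,y) = f(x+r, y+r) is proper and the graphs induced on the complement of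
that class evolve exactly by the degree dynamics with potential g; (iii) if the
induced dynamics stabilizes after k steps, so does the whole dynamics. -/
theorem degreeDynamics_renormalization_top {V : Type*} [Fintype V]
    (f : ℕ → ℕ → ℝ)
    (hsym : ∀ x y, f x y = f y x)
    (hmono : ∀ x₁ x₂ y₁ y₂ : ℕ, x₁ ≤ x₂ → y₁ ≤ y₂ → f x₁ y₁ ≤ f x₂ y₂)
    (β : ℝ) (G : ℕ → SimpleGraph V)
    (hdyn : ∀ t : ℕ, ∀ u v : V, u ≠ v →
      ((G (t + 1)).Adj u v ↔ β ≤ f (deg (G t) u) (deg (G t) v)))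
    (c : ℕ)
    (hmax : ∀ t ≥ c, ∃ v : V, deg (G t) v = Fintype.card V - 1)
    (R : Set V) (hR : R = {v : V | deg (G c) v = Fintype.card V - 1})
    (r : ℕ) (hr : r = R.ncard) :
    (∀ t ≥ c, ∀ v ∈ R, deg (G t) v = Fintype.card V - 1) ∧
    ((∀ x y : ℕ, f (x + r) (y + r) = f (y + r) (x + r)) ∧
      (∀ x₁ x₂ y₁ y₂ : ℕ, x₁ ≤ x₂ → y₁ ≤ y₂ →
        f (x₁ + r) (y₁ + r) ≤ f (x₂ + r) (y₂ + r)) ∧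
      (∀ t ≥ c, ∀ u v : V, u ∉ R → v ∉ R → u ≠ v →
        ((G (t + 1)).Adj u v ↔
          β ≤ f (degIn (G t) Rᶜ u + r) (degIn (G t) Rᶜ v + r)))) ∧
    (∀ k : ℕ,
      (∀ t ≥ c + k, ∀ u v : V, u ∉ R → v ∉ R →
        ((G t).Adj u v ↔ (G (c + k)).Adj u v)) →
      ∀ t ≥ c + k, G t = G (c + k)) := by
  -- Part (i)
  have part1 : ∀ t ≥ c, ∀ v ∈ R, deg (G t) v = Fintype.card V - 1 := by
    have key : ∀ m : ℕ, ∀ v ∈ R, deg (G (c + m)) v = Fintype.card V - 1 := by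
      intro m
      induction m with
      | zero => intro v hv; rw [hR] at hv; exact hv
      | succ m ih =>
        intro u hu
        have hdu : deg (G (c + m)) u = Fintype.card V - 1 := ih u hu
        obtain ⟨w, hw⟩ := hmax (c + m + 1) (by omega)
        have hwadj : ∀ x, x ≠ w → (G (c + m + 1)).Adj w x := (deg_eq_iff _ _).mp hw
        rw [show c + (m + 1) = c + m + 1 by ring, deg_eq_iff]
        intro v hv
        rw [hdyn (c + m) u v (Ne.symm hv), hdu]
        by_cases hvw : v = w
        · subst hvw
          have := (hdyn (c + m) v u hv).mp (hwadj u (Ne.symm hv))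
          calc β ≤ f (deg (G (c + m)) v) (deg (G (c + m)) u) := this
          _ = f (deg (G (c + m)) u) (deg (G (c + m)) v) := hsym _ _
          _ ≤ f (Fintype.card V - 1) (deg (G (c + m)) v) := by
              apply hmono _ _ _ _ (deg_le _ _) le_rfl
        · have := (hdyn (c + m) w v (Ne.symm hvw)).mp (hwadj v hvw)
          calc β ≤ f (deg (G (c + m)) w) (deg (G (c + m)) v) := this
          _ ≤ f (Fintype.card V - 1) (deg (G (c + m)) v) :=
              hmono _ _ _ _ (deg_le _ _) le_rfl
    intro t ht v hv
    have : t = c + (t - c) := by omega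
    rw [this]
    exact key (t - c) v hv
  -- adjacency of R vertices to everything
  have hRadj : ∀ t ≥ c, ∀ w ∈ R, ∀ x, x ≠ w → (G t).Adj w x := by
    intro t ht w hw x hx
    exact (deg_eq_iff _ _).mp (part1 t ht w hw) x hx
  -- degree decomposition for non-R vertices
  have hdecomp : ∀ t ≥ c, ∀ u, u ∉ R → deg (G t) u = degIn (G t) Rᶜ u + r := by
    intro t ht u hu
    rw [hr]
    apply deg_decomp _ _ _ hu
    intro w hw
    have huw : u ≠ w := fun h => hu (h ▸ hw)
    exact ((G t).adj_symm (hRadj t ht w hw u huw))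
  refine ⟨part1, ⟨fun x y => hsym _ _, fun x₁ x₂ y₁ y₂ h1 h2 =>
      hmono _ _ _ _ (by omega) (by omega), ?_⟩, ?_⟩
  · intro t ht u v hu hv huv
    rw [hdyn t u v huv, hdecomp t ht u hu, hdecomp t ht v hv]
  · intro k hstab t ht
    ext u v
    constructor <;> intro h
    · by_cases huv : u = v
      · exact absurd (huv ▸ h) ((G t).irrefl)
      by_cases hu : u ∈ R
      · exact hRadj (c + k) (Nat.le_add_right c k) u hu v (Ne.symm huv)
      by_cases hv : v ∈ R
      · exact ((G (c + k)).adj_symm (hRadj (c + k) (Nat.le_add_right c k) v hv u huv))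
      · exact (hstab t ht u v hu hv).mp h
    · by_cases huv : u = v
      · exact absurd (huv ▸ h) ((G (c + k)).irrefl)
      by_cases hu : u ∈ R
      · exact hRadj t (by omega) u hu v (Ne.symm huv)
      by_cases hv : v ∈ R
      · exact ((G t).adj_symm (hRadj t (by omega) v hv u huv))
      · exact (hstab t ht u v hu hv).mpr h
end

section
/- Suppose that in the degree dynamics there is a time c such that for every t ≥ c the minimum vertex degree of G(t) equals 0 (some vertex is isolated at every time t ≥ c). Let S be the set of vertices isolated in G(c). Then: (i) for every t ≥ c, every vertex of S is isolated in G(t); (ii) for every t ≥ c and all distinct u, v ∈ V \ S, the degree of u in G(t) equals its degree in the induced subgraph G(t)[V \ S], and {u,v} is an edge of G(t+1) if and only if f applied to the degrees of u and v in G(t)[V \ S] is at least β; hence the induced subgraphs G(t)[V \ S], t ≥ c, evolve exactly by the degree dynamics with the same potential f and threshold β. Consequently, if that induced dynamics started from G(c)[V \ S] stabilizes after k steps, then G(t) = G(c+k) for all t ≥ c+k. -/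
def IsDegreeDynamics {V : Type*} (f : ℕ → ℕ → ℝ) (β : ℝ) (G : ℕ → SimpleGraph V) : Prop :=
  ∀ t : ℕ, ∀ u v : V, u ≠ v → ((G (t + 1)).Adj u v ↔ β ≤ f (deg (G t) u) (deg (G t) v))

section DegreeDynamics

variable {V : Type*}

theorem deg_eq_zero_iff [Finite V] (G : SimpleGraph V) (v : V) :
    deg G v = 0 ↔ ∀ w, ¬ G.Adj v w := by
  simp [deg, Set.ncard_eq_zero (Set.toFinite _), Set.eq_empty_iff_forall_notMem]

theorem deg_eq_degIn_compl {G : SimpleGraph V} {S : Set V} (hS : ∀ v ∈ S, ∀ w, ¬ G.Adj v w)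
    (u : V) : deg G u = degIn G Sᶜ u := by
  unfold deg degIn
  congr 1
  ext w
  exact ⟨fun h => ⟨fun hw => hS w hw u h.symm, h⟩, And.right⟩

theorem SimpleGraph.eq_of_adj_iff_on_compl {G H : SimpleGraph V} {S : Set V}
    (hG : ∀ v ∈ S, ∀ w, ¬ G.Adj v w) (hH : ∀ v ∈ S, ∀ w, ¬ H.Adj v w)
    (hadj : ∀ u v, u ∉ S → v ∉ S → (G.Adj u v ↔ H.Adj u v)) : G = H := by
  ext u v
  by_cases hu : u ∈ S
  · simp [hG u hu v, hH u hu v]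
  by_cases hv : v ∈ S
  · exact iff_of_false (fun h => hG v hv u h.symm) (fun h => hH v hv u h.symm)
  exact hadj u v hu hv

variable {f : ℕ → ℕ → ℝ} {β : ℝ} {G : ℕ → SimpleGraph V}

theorem IsDegreeDynamics.adj_succ_of_adj_succ_isolated (hG : IsDegreeDynamics f β G)
    (hmono : ∀ x, Monotone (f x)) {t : ℕ} {u v : V} (hv : deg (G t) v = 0)
    (hvu : (G (t + 1)).Adj v u) {x : V} (hxu : x ≠ u) : (G (t + 1)).Adj u x := by
  have hβ : β ≤ f (deg (G t) u) 0 := hv ▸ (hG t u v hvu.ne.symm).mp hvu.symm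
  exact (hG t u x hxu.symm).mpr (hβ.trans (hmono _ (Nat.zero_le _)))

theorem IsDegreeDynamics.deg_succ_eq_zero [Finite V] (hG : IsDegreeDynamics f β G)
    (hmono : ∀ x, Monotone (f x)) {t : ℕ} {v : V} (hv : deg (G t) v = 0)
    (hiso : ∃ w, deg (G (t + 1)) w = 0) : deg (G (t + 1)) v = 0 := by
  obtain ⟨w, hw⟩ := hiso
  rw [deg_eq_zero_iff] at hw ⊢
  intro u hvu
  by_cases hwu : w = u
  · exact hw v (hwu ▸ hvu.symm)
  · exact hw u (hG.adj_succ_of_adj_succ_isolated hmono hv hvu hwu).symm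

theorem IsDegreeDynamics.deg_eq_zero_of_le [Finite V] (hG : IsDegreeDynamics f β G)
    (hmono : ∀ x, Monotone (f x)) {c : ℕ} (hiso : ∀ t ≥ c, ∃ w, deg (G t) w = 0) {v : V}
    (hv : deg (G c) v = 0) {t : ℕ} (ht : c ≤ t) : deg (G t) v = 0 := by
  induction t, ht using Nat.le_induction with
  | base => exact hv
  | succ t ht ih => exact hG.deg_succ_eq_zero hmono ih (hiso (t + 1) (by omega))

end DegreeDynamics

theorem degreeDynamics_renormalization_bottom_general {V : Type*} [Fintype V]
    (f : ℕ → ℕ → ℝ)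
    (hmono : ∀ x₁ x₂ y₁ y₂ : ℕ, x₁ ≤ x₂ → y₁ ≤ y₂ → f x₁ y₁ ≤ f x₂ y₂)
    (β : ℝ) (G : ℕ → SimpleGraph V)
    (hdyn : ∀ t : ℕ, ∀ u v : V, u ≠ v →
      ((G (t + 1)).Adj u v ↔ β ≤ f (deg (G t) u) (deg (G t) v)))
    (c : ℕ)
    (hmin : ∀ t ≥ c, ∃ v : V, deg (G t) v = 0)
    (S : Set V) (hS : S = {v : V | deg (G c) v = 0}) :
    (∀ t ≥ c, ∀ v ∈ S, deg (G t) v = 0) ∧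
    ((∀ t ≥ c, ∀ u : V, u ∉ S → deg (G t) u = degIn (G t) Sᶜ u) ∧
      (∀ t ≥ c, ∀ u v : V, u ∉ S → v ∉ S → u ≠ v →
        ((G (t + 1)).Adj u v ↔
          β ≤ f (degIn (G t) Sᶜ u) (degIn (G t) Sᶜ v)))) ∧
    (∀ k : ℕ,
      (∀ t ≥ c + k, ∀ u v : V, u ∉ S → v ∉ S →
        ((G t).Adj u v ↔ (G (c + k)).Adj u v)) →
      ∀ t ≥ c + k, G t = G (c + k)) := by
  have hG : IsDegreeDynamics f β G := hdyn
  have hmono₂ : ∀ x, Monotone (f x) := fun x _ _ h => hmono x x _ _ le_rfl h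
  have hiso : ∀ t ≥ c, ∀ v ∈ S, deg (G t) v = 0 := fun t ht v hv =>
    hG.deg_eq_zero_of_le hmono₂ hmin (by rwa [hS] at hv) ht
  have hnadj : ∀ t ≥ c, ∀ v ∈ S, ∀ w, ¬ (G t).Adj v w := fun t ht v hv =>
    (deg_eq_zero_iff _ _).mp (hiso t ht v hv)
  have hdeg : ∀ t ≥ c, ∀ u, deg (G t) u = degIn (G t) Sᶜ u := fun t ht =>
    deg_eq_degIn_compl (hnadj t ht)
  refine ⟨hiso, ⟨fun t ht u _ => hdeg t ht u, fun t ht u v _ _ huv => ?_⟩, ?_⟩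
  · rw [hdyn t u v huv, hdeg t ht u, hdeg t ht v]
  · intro k hstab t ht
    exact SimpleGraph.eq_of_adj_iff_on_compl (hnadj t (by omega)) (hnadj (c + k) (by omega))
      (hstab t ht)

/-- renormalization, bottom class: if from time c on the minimum
degree is always 0, then (i) the vertices isolated at time c stay isolated forever;
(ii) on the complement of that set the degrees coincide with the induced degrees
and the induced subgraphs evolve exactly by the degree dynamics with the same f
and β; (iii) if the induced dynamics stabilizes after k steps, so does the whole
dynamics. -/
theorem degreeDynamics_renormalization_bottom {V : Type*} [Fintype V]
    (f : ℕ → ℕ → ℝ)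
    (hsym : ∀ x y, f x y = f y x)
    (hmono : ∀ x₁ x₂ y₁ y₂ : ℕ, x₁ ≤ x₂ → y₁ ≤ y₂ → f x₁ y₁ ≤ f x₂ y₂)
    (β : ℝ) (G : ℕ → SimpleGraph V)
    (hdyn : ∀ t : ℕ, ∀ u v : V, u ≠ v →
      ((G (t + 1)).Adj u v ↔ β ≤ f (deg (G t) u) (deg (G t) v)))
    (c : ℕ)
    (hmin : ∀ t ≥ c, ∃ v : V, deg (G t) v = 0)
    (S : Set V) (hS : S = {v : V | deg (G c) v = 0}) :
    (∀ t ≥ c, ∀ v ∈ S, deg (G t) v = 0) ∧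
    ((∀ t ≥ c, ∀ u : V, u ∉ S → deg (G t) u = degIn (G t) Sᶜ u) ∧
      (∀ t ≥ c, ∀ u v : V, u ∉ S → v ∉ S → u ≠ v →
        ((G (t + 1)).Adj u v ↔
          β ≤ f (degIn (G t) Sᶜ u) (degIn (G t) Sᶜ v)))) ∧
    (∀ k : ℕ,
      (∀ t ≥ c + k, ∀ u v : V, u ∉ S → v ∉ S →
        ((G t).Adj u v ↔ (G (c + k)).Adj u v)) →
      ∀ t ≥ c + k, G t = G (c + k)) :=
  degreeDynamics_renormalization_bottom_general f hmono β G hdyn c hmin S hS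
end

section
/- In the degree dynamics, if f(n−1, 0) < β, then every vertex that is isolated (has degree 0) in G(t) remains isolated in G(t') for all t' ≥ t. -/
lemma deg_eq_zero_iff_isIsolated {V : Type*} [Finite V] (G : SimpleGraph V) (v : V) :
    deg G v = 0 ↔ G.IsIsolated v := by
  rw [deg, Set.ncard_eq_zero, SimpleGraph.neighborSet_eq_empty]

lemma deg_le_card_sub_one {V : Type*} [Fintype V] (G : SimpleGraph V) (v : V) :
    deg G v ≤ Fintype.card V - 1 := by
  classical
  rw [deg, Set.ncard_eq_toFinset_card', Set.toFinset_card, G.card_neighborSet_eq_degree]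
  have := G.degree_lt_card_verts v
  omega

lemma isIsolated_next_of_isIsolated {V : Type*} [Fintype V] {f : ℕ → ℕ → ℝ}
    (hsym : ∀ x y, f x y = f y x)
    (hmono : ∀ x₁ x₂ y₁ y₂ : ℕ, x₁ ≤ x₂ → y₁ ≤ y₂ → f x₁ y₁ ≤ f x₂ y₂)
    {β : ℝ} (hf : f (Fintype.card V - 1) 0 < β) {G G' : SimpleGraph V}
    (hdyn : ∀ u w : V, G'.Adj u w → β ≤ f (deg G u) (deg G w))
    {v : V} (hv : G.IsIsolated v) : G'.IsIsolated v := by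
  intro u hadj
  have hv₀ : deg G v = 0 := (deg_eq_zero_iff_isIsolated G v).mpr hv
  have : f (deg G v) (deg G u) < β :=
    calc f (deg G v) (deg G u) ≤ f 0 (Fintype.card V - 1) :=
          hmono _ _ _ _ hv₀.le (deg_le_card_sub_one G u)
      _ = f (Fintype.card V - 1) 0 := hsym _ _
      _ < β := hf
  exact (hdyn v u hadj).not_gt this

/-- in the degree dynamics, if f(n−1, 0) < β then isolated vertices
stay isolated forever. -/
theorem degreeDynamics_isolated_stays_isolated {V : Type*} [Fintype V]
    (f : ℕ → ℕ → ℝ)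
    (hsym : ∀ x y, f x y = f y x)
    (hmono : ∀ x₁ x₂ y₁ y₂ : ℕ, x₁ ≤ x₂ → y₁ ≤ y₂ → f x₁ y₁ ≤ f x₂ y₂)
    (β : ℝ) (G : ℕ → SimpleGraph V)
    (hdyn : ∀ t : ℕ, ∀ u v : V, u ≠ v →
      ((G (t + 1)).Adj u v ↔ β ≤ f (deg (G t) u) (deg (G t) v)))
    (hf : f (Fintype.card V - 1) 0 < β) :
    ∀ t : ℕ, ∀ v : V, deg (G t) v = 0 → ∀ t' ≥ t, deg (G t') v = 0 := by
  intro t v hv t' ht'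
  induction t', ht' using Nat.le_induction with
  | base => exact hv
  | succ s _ ih =>
    rw [deg_eq_zero_iff_isIsolated] at ih ⊢
    exact isIsolated_next_of_isIsolated hsym hmono hf
      (fun u w hadj => (hdyn s u w hadj.ne).mp hadj) ih
end

section
/- For the (α,β)-dynamics with a proper potential f, a degree-like function g, and any fair scheduler: if (t, D) is a Done pair with |D| < |V|, then there exist a time t' > t and a set D' with D ⊆ D' ⊆ V and |D'| = |D| + 1 such that (t', D') is a Done pair. -/
/-- A pair (t, D) is Done if the neighborhood of every vertex of D never changes
after time t. -/
def Done {V : Type*} (G : ℕ → SimpleGraph V) (t : ℕ) (D : Set V) : Prop :=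
  ∀ u ∈ D, ∀ t' ≥ t, (G t').neighborSet u = (G t).neighborSet u

/-- An antitone (under inclusion) sequence of subsets of a finite type is
eventually constant. -/
lemma evConst {V : Type*} [Fintype V] (S : ℕ → Set V) (s₀ : ℕ)
    (h : ∀ s, s₀ ≤ s → S (s + 1) ⊆ S s) :
    ∃ s₂, s₀ ≤ s₂ ∧ ∀ s, s₂ ≤ s → S s = S s₂ := by
  have chain : ∀ s, s₀ ≤ s → ∀ s', s ≤ s' → S s' ⊆ S s := by
    intro s hs s' hs'
    induction s', hs' using Nat.le_induction with
    | base => exact subset_rfl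
    | succ n hn ih => exact (h n (hs.trans hn)).trans ih
  have hKne : (sInf {k : ℕ | ∃ s, s₀ ≤ s ∧ (S s).ncard = k}) ∈
      {k : ℕ | ∃ s, s₀ ≤ s ∧ (S s).ncard = k} :=
    Nat.sInf_mem ⟨(S s₀).ncard, s₀, le_refl _, rfl⟩
  obtain ⟨s₂, hs₂, hk⟩ := hKne
  refine ⟨s₂, hs₂, fun s hs => ?_⟩
  have hsub : S s ⊆ S s₂ := chain s₂ hs₂ s hs
  have hle : (S s₂).ncard ≤ (S s).ncard := by
    rw [hk]; exact Nat.sInf_le ⟨s, hs₂.trans hs, rfl⟩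
  exact Set.eq_of_subset_of_ncard_le hsub hle (Set.toFinite _)

/-- A monotone (under inclusion) sequence of subsets of a finite type is
eventually constant. -/
lemma evConst' {V : Type*} [Fintype V] (S : ℕ → Set V) (s₀ : ℕ)
    (h : ∀ s, s₀ ≤ s → S s ⊆ S (s + 1)) :
    ∃ s₂, s₀ ≤ s₂ ∧ ∀ s, s₂ ≤ s → S s = S s₂ := by
  obtain ⟨s₂, hs₂, hc⟩ := evConst (fun s => (S s)ᶜ) s₀
    (fun s hs => Set.compl_subset_compl.2 (h s hs))
  exact ⟨s₂, hs₂, fun s hs => compl_injective (hc s hs)⟩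

/-- for the (α,β)-dynamics with proper potential f, degree-like
function g and a fair scheduler, every Done pair (t, D) with |D| < |V| can be
extended to a Done pair (t', D') with t' > t, D ⊆ D' and |D'| = |D| + 1. -/
theorem thresholdDynamics_done_pair_extends {V : Type*} [Fintype V]
    (f : ℝ → ℝ → ℝ)
    (hfsym : ∀ x y, f x y = f y x)
    (hfmono : ∀ x₁ x₂ y₁ y₂ : ℝ, x₁ ≤ x₂ → y₁ ≤ y₂ → f x₁ y₁ ≤ f x₂ y₂)
    (g : Set V → ℝ)
    (hg : ∀ N N' : Set V, N ⊆ N' → g N ≤ g N')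
    (α β : ℝ) (hαβ : α ≤ β)
    (G : ℕ → SimpleGraph V) (C : ℕ → Set (Sym2 V))
    (hCdistinct : ∀ t : ℕ, ∀ p ∈ C t, ¬ p.IsDiag)
    (hfair : ∀ u v : V, u ≠ v → ∀ t : ℕ, ∃ t' ≥ t, s(u, v) ∈ C t')
    (hdel : ∀ t : ℕ, ∀ u v : V, s(u, v) ∈ C t →
      f (g ((G t).neighborSet u)) (g ((G t).neighborSet v)) < α →
      ¬ (G (t + 1)).Adj u v)
    (hkeep : ∀ t : ℕ, ∀ u v : V, s(u, v) ∈ C t →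
      α ≤ f (g ((G t).neighborSet u)) (g ((G t).neighborSet v)) →
      f (g ((G t).neighborSet u)) (g ((G t).neighborSet v)) < β →
      ((G (t + 1)).Adj u v ↔ (G t).Adj u v))
    (hadd : ∀ t : ℕ, ∀ u v : V, s(u, v) ∈ C t →
      β ≤ f (g ((G t).neighborSet u)) (g ((G t).neighborSet v)) →
      (G (t + 1)).Adj u v)
    (hstay : ∀ t : ℕ, ∀ u v : V, s(u, v) ∉ C t →
      ((G (t + 1)).Adj u v ↔ (G t).Adj u v))
    (t : ℕ) (D : Set V) (hD : Done G t D) (hcard : D.ncard < Fintype.card V) :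
    ∃ t' > t, ∃ D' : Set V, D ⊆ D' ∧ D'.ncard = D.ncard + 1 ∧ Done G t' D' := by
  classical
  -- there is a vertex outside D
  have hexu : ∃ v : V, v ∉ D := by
    by_contra hno
    push_neg at hno
    have : D = Set.univ := Set.eq_univ_of_forall hno
    rw [this, Set.ncard_univ, Nat.card_eq_fintype_card] at hcard
    exact lt_irrefl _ hcard
  -- the set of achieved values outside D after time t
  have hAfin : {r : ℝ | ∃ w, w ∉ D ∧ ∃ s, t ≤ s ∧ r = g ((G s).neighborSet w)}.Finite := by
    apply (Set.finite_range g).subset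
    rintro r ⟨w, _, s, _, rfl⟩
    exact ⟨(G s).neighborSet w, rfl⟩
  obtain ⟨v₀, hv₀⟩ := hexu
  have hAne : {r : ℝ | ∃ w, w ∉ D ∧ ∃ s, t ≤ s ∧ r = g ((G s).neighborSet w)}.Nonempty :=
    ⟨g ((G t).neighborSet v₀), v₀, hv₀, t, le_refl _, rfl⟩
  obtain ⟨m, hmA, hmax'⟩ := Set.Finite.exists_maximalFor id _ hAfin hAne
  have hmax : ∀ r ∈ {r : ℝ | ∃ w, w ∉ D ∧ ∃ s, t ≤ s ∧ r = g ((G s).neighborSet w)}, r ≤ m := by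
    intro r hr
    by_contra hlt
    push_neg at hlt
    exact absurd (hmax' hr hlt.le) (not_le.mpr hlt)
  have hxle : ∀ w, w ∉ D → ∀ s, t ≤ s → g ((G s).neighborSet w) ≤ m :=
    fun w hw s hs => hmax _ ⟨w, hw, s, hs, rfl⟩
  -- neighborhoods of vertices in D (hence their adjacencies) are frozen
  have hfrozen : ∀ d ∈ D, ∀ w, ∀ s, t ≤ s → ((G s).Adj d w ↔ (G t).Adj d w) := by
    intro d hd w s hs
    have h1 := hD d hd s hs
    rw [Set.ext_iff] at h1
    simpa [SimpleGraph.mem_neighborSet] using h1 w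
  -- an edge appearing forces potential ≥ β
  have hAdd : ∀ s u w, ¬ (G s).Adj u w → (G (s + 1)).Adj u w →
      β ≤ f (g ((G s).neighborSet u)) (g ((G s).neighborSet w)) := by
    intro s u w h0 h1
    by_cases hsch : s(u, w) ∈ C s
    · rcases lt_or_ge (f (g ((G s).neighborSet u)) (g ((G s).neighborSet w))) α with h | h
      · exact absurd h1 (hdel s u w hsch h)
      · rcases lt_or_ge (f (g ((G s).neighborSet u)) (g ((G s).neighborSet w))) β with h2 | h2
        · exact absurd ((hkeep s u w hsch h h2).mp h1) h0
        · exact h2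
    · exact absurd ((hstay s u w hsch).mp h1) h0
  -- an edge disappearing forces potential < α
  have hDel : ∀ s u w, (G s).Adj u w → ¬ (G (s + 1)).Adj u w →
      f (g ((G s).neighborSet u)) (g ((G s).neighborSet w)) < α := by
    intro s u w h0 h1
    by_cases hsch : s(u, w) ∈ C s
    · rcases lt_or_ge (f (g ((G s).neighborSet u)) (g ((G s).neighborSet w))) α with h | h
      · exact h
      · rcases lt_or_ge (f (g ((G s).neighborSet u)) (g ((G s).neighborSet w))) β with h2 | h2
        · exact absurd ((hkeep s u w hsch h h2).mpr h0) h1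
        · exact absurd (hadd s u w hsch h2) h1
    · exact absurd ((hstay s u w hsch).mpr h0) h1
  -- once a vertex outside D has an eventually-constant neighborhood, we are done
  have finish : ∀ u, u ∉ D → ∀ t₂, t ≤ t₂ →
      (∀ s, t₂ ≤ s → (G s).neighborSet u = (G t₂).neighborSet u) →
      ∃ t' > t, ∃ D' : Set V, D ⊆ D' ∧ D'.ncard = D.ncard + 1 ∧ Done G t' D' := by
    intro u hu t₂ ht₂ hstab
    refine ⟨t₂ + 1, by omega, insert u D, Set.subset_insert _ _,
      Set.ncard_insert_of_notMem hu (Set.toFinite D), ?_⟩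
    intro w hw s hs
    rcases Set.mem_insert_iff.mp hw with rfl | hwD
    · rw [hstab s (by omega), hstab (t₂ + 1) (by omega)]
    · rw [hD w hwD s (by omega), hD w hwD (t₂ + 1) (by omega)]
  by_cases hlow : ∃ u, u ∉ D ∧ ∃ s, t ≤ s ∧ f m (g ((G s).neighborSet u)) < α
  · -- a "low" vertex: its neighborhood can only shrink
    obtain ⟨u, hu, s₀, hs₀, hl⟩ := hlow
    have step : ∀ s, t ≤ s → f m (g ((G s).neighborSet u)) < α →
        (G (s + 1)).neighborSet u ⊆ (G s).neighborSet u := by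
      intro s hs hls w hw
      by_contra hw'
      rw [SimpleGraph.mem_neighborSet] at hw hw'
      by_cases hwD : w ∈ D
      · have h1 := (hfrozen w hwD u (s + 1) (by omega)).mp hw.symm
        exact hw' ((hfrozen w hwD u s hs).mpr h1).symm
      · have hb := hAdd s u w hw' hw
        have h2 : f (g ((G s).neighborSet u)) (g ((G s).neighborSet w)) ≤
            f m (g ((G s).neighborSet u)) := by
          rw [hfsym]
          exact hfmono _ _ _ _ (hxle w hwD s hs) (le_refl _)
        linarith
    have inv : ∀ s, s₀ ≤ s → f m (g ((G s).neighborSet u)) < α := by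
      intro s hs
      induction s, hs using Nat.le_induction with
      | base => exact hl
      | succ n hn ih =>
        have hsub := step n (hs₀.trans hn) ih
        have hle2 : g ((G (n + 1)).neighborSet u) ≤ g ((G n).neighborSet u) := hg _ _ hsub
        exact lt_of_le_of_lt (hfmono m m _ _ (le_refl _) hle2) ih
    obtain ⟨t₂, ht₂, hconst⟩ := evConst (fun s => (G s).neighborSet u) s₀
      (fun s hs => step s (hs₀.trans hs) (inv s hs))
    exact finish u hu t₂ (hs₀.trans ht₂) hconst
  · -- no low vertex: the vertex attaining m never loses a neighbor
    push_neg at hlow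
    obtain ⟨v, hvD, s₁, hs₁, hvm⟩ := hmA
    have step2 : ∀ s, s₁ ≤ s → (G s₁).neighborSet v ⊆ (G s).neighborSet v →
        (G s).neighborSet v ⊆ (G (s + 1)).neighborSet v := by
      intro s hs hsub w hw
      by_contra hw'
      rw [SimpleGraph.mem_neighborSet] at hw hw'
      have hts : t ≤ s := hs₁.trans hs
      by_cases hwD : w ∈ D
      · have h1 := (hfrozen w hwD v s hts).mp hw.symm
        exact hw' ((hfrozen w hwD v (s + 1) (by omega)).mpr h1).symm
      · have hvs : g ((G s).neighborSet v) = m := by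
          refine le_antisymm (hxle v hvD s hts) ?_
          rw [hvm]
          exact hg _ _ hsub
        have hd := hDel s v w hw hw'
        rw [hvs] at hd
        exact absurd hd (not_lt.mpr (hlow w hwD s hts))
    have inv2 : ∀ s, s₁ ≤ s → (G s₁).neighborSet v ⊆ (G s).neighborSet v := by
      intro s hs
      induction s, hs using Nat.le_induction with
      | base => exact subset_rfl
      | succ n hn ih => exact ih.trans (step2 n hn ih)
    obtain ⟨t₂, ht₂, hconst⟩ := evConst' (fun s => (G s).neighborSet v) s₁
      (fun s hs => step2 s hs (inv2 s hs))
    exact finish v hvD t₂ (hs₁.trans ht₂) hconst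
end

section
/- For the (α,β)-dynamics with a proper potential f, a degree-like function g, and an arbitrary scheduler subject to the fairness condition, the dynamics stabilizes: there exists a time t such that G(t') = G(t) for all t' ≥ t. -/
/-!
If the dynamics never stabilized, some pair would flip forever. Among the values `g (N_t u)` seen
at deletion events `(t, u)`, let `M` be the largest one occurring infinitely often. Late enough,
every vertex that will lose a neighbour has value at most `M`, because its neighbourhood only
grows until that loss. Take a late deletion of `uy` with `g (N u) = M`, so that
`f (g (N y)) M < α`. From then on `y` never gains a neighbour `z`: the value of `y` has not
grown, and `z`, whose new edge must flip back later, has value at most `M`, so the potential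
stays below `α ≤ β`. But `uy` flips forever, so `y` does gain a neighbour again.
-/

open Filter

namespace Filter

variable {p : ℕ → Prop}

theorem EventuallyConst.eventually_succ_iff (h : EventuallyConst p atTop) :
    ∀ᶠ t in atTop, (p (t + 1) ↔ p t) := by
  obtain ⟨n, hn⟩ := eventuallyConst_atTop_nat.1 h
  exact eventually_atTop.2 ⟨n, fun m hm => Iff.of_eq (hn m hm)⟩

theorem frequently_rise_of_not_eventuallyConst (h : ¬EventuallyConst p atTop) :
    ∃ᶠ t in atTop, ¬p t ∧ p (t + 1) := by
  simp only [eventuallyConst_pred, not_or, not_eventually, not_not] at h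
  intro hno
  obtain ⟨T, hT⟩ := eventually_atTop.1 hno
  obtain ⟨s, hTs, hs⟩ := frequently_atTop.1 h.1 T
  have stays_false : ∀ t, s ≤ t → ¬p t := by
    intro t hst
    induction t, hst using Nat.le_induction with
    | base => exact hs
    | succ t hst ih => exact fun hp => hT t (hTs.trans hst) ⟨ih, hp⟩
  obtain ⟨t, hst, ht⟩ := frequently_atTop.1 h.2 s
  exact stays_false t hst ht

theorem frequently_fall_of_not_eventuallyConst (h : ¬EventuallyConst p atTop) :
    ∃ᶠ t in atTop, p t ∧ ¬p (t + 1) := by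
  have h' : ¬EventuallyConst (fun t => ¬p t) atTop := by
    simpa only [eventuallyConst_pred, not_not, or_comm] using h
  simpa only [not_not] using frequently_rise_of_not_eventuallyConst h'

theorem exists_frequently_eq_and_eventually_le {β ι α : Type*} [LinearOrder α] {l : Filter β}
    {S : Set α} (hS : S.Finite) {a : β → ι → α} (haS : ∀ t i, a t i ∈ S) {P : β → ι → Prop}
    (hP : ∃ᶠ t in l, ∃ i, P t i) :
    ∃ M, (∃ᶠ t in l, ∃ i, P t i ∧ a t i = M) ∧ ∀ᶠ t in l, ∀ i, P t i → a t i ≤ M := by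
  set R := {w ∈ S | ∃ᶠ t in l, ∃ i, P t i ∧ a t i = w}
  have hR : R.Nonempty := by
    have : ∃ᶠ t in l, ∃ w ∈ S, ∃ i, P t i ∧ a t i = w :=
      hP.mono fun t ⟨i, hi⟩ => ⟨a t i, haS t i, i, hi, rfl⟩
    exact hS.frequently_exists.1 this
  obtain ⟨M, ⟨-, hM⟩, hMmax⟩ := Set.exists_max_image R id (hS.subset (Set.sep_subset _ _)) hR
  refine ⟨M, hM, ?_⟩
  have above_rare : ∀ w ∈ S, ∀ᶠ t in l, M < w → ∀ i, P t i → a t i ≠ w := by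
    intro w hw
    by_cases hMw : M < w
    · have : ¬∃ᶠ t in l, ∃ i, P t i ∧ a t i = w := fun hf => (hMmax w ⟨hw, hf⟩).not_gt hMw
      exact (not_frequently.1 this).mono fun t ht _ i hi hai => ht ⟨i, hi, hai⟩
    · exact Eventually.of_forall fun _ h => absurd h hMw
  filter_upwards [hS.eventually_all.2 above_rare] with t ht i hi
  exact le_of_not_gt fun hlt => ht (a t i) (haS t i) hlt i hi rfl

end Filter

namespace SimpleGraph

variable {V : Type*} (G : ℕ → SimpleGraph V)

theorem le_of_forall_fall_le {γ : Type*} [Preorder γ] {g : Set V → γ} (hg : Monotone g)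
    {T : ℕ} {M : γ}
    (hM : ∀ t, T ≤ t → ∀ z x, (G t).Adj z x → ¬(G (t + 1)).Adj z x → g ((G t).neighborSet z) ≤ M)
    {z x : V} {s : ℕ} (hadj : (G s).Adj z x) (hnadj : ¬(G (s + 1)).Adj z x) {t : ℕ}
    (hTt : T ≤ t) (hts : t ≤ s) : g ((G t).neighborSet z) ≤ M := by
  induction hts using Nat.decreasingInduction with
  | self => exact hM s hTt z x hadj hnadj
  | of_succ k _ ih =>
    by_cases hfall : ∃ x, (G k).Adj z x ∧ ¬(G (k + 1)).Adj z x
    · obtain ⟨y, hy, hny⟩ := hfall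
      exact hM k hTt z y hy hny
    · push Not at hfall
      exact (hg fun y => hfall y).trans (ih (hTt.trans k.le_succ))

variable [Finite V]

theorem eventuallyConst_atTop_of_forall_adj
    (h : ∀ u v, EventuallyConst (fun t => (G t).Adj u v) atTop) : EventuallyConst G atTop := by
  have : ∀ᶠ t in atTop, ∀ u v, ((G (t + 1)).Adj u v ↔ (G t).Adj u v) := by
    simp only [eventually_all]
    exact fun u v => (h u v).eventually_succ_iff
  obtain ⟨n, hn⟩ := eventually_atTop.1 this
  exact eventuallyConst_atTop_nat.2 ⟨n, fun m hm => by ext u v; exact hn m hm u v⟩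

theorem eventually_not_eventuallyConst_of_adj_change :
    ∀ᶠ t in atTop, ∀ u v, ¬((G (t + 1)).Adj u v ↔ (G t).Adj u v) →
      ¬EventuallyConst (fun s => (G s).Adj u v) atTop := by
  simp only [eventually_all]
  intro u v
  by_cases h : EventuallyConst (fun s => (G s).Adj u v) atTop
  · exact h.eventually_succ_iff.mono fun _ ht hne => absurd ht hne
  · exact Eventually.of_forall fun _ _ => h

theorem eventuallyConst_of_threshold (f : ℝ → ℝ → ℝ)
    (hf : ∀ x₁ x₂ y₁ y₂ : ℝ, x₁ ≤ x₂ → y₁ ≤ y₂ → f x₁ y₁ ≤ f x₂ y₂)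
    (g : Set V → ℝ) (hg : Monotone g) {α β : ℝ} (hαβ : α ≤ β)
    (hfall : ∀ t u v, (G t).Adj u v → ¬(G (t + 1)).Adj u v →
      f (g ((G t).neighborSet u)) (g ((G t).neighborSet v)) < α)
    (hrise : ∀ t u v, ¬(G t).Adj u v → (G (t + 1)).Adj u v →
      β ≤ f (g ((G t).neighborSet u)) (g ((G t).neighborSet v))) :
    EventuallyConst G atTop := by
  by_contra hG
  obtain ⟨u₀, v₀, h₀⟩ : ∃ u v, ¬EventuallyConst (fun t => (G t).Adj u v) atTop := by
    by_contra! h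
    exact hG (eventuallyConst_atTop_of_forall_adj G h)
  set a : ℕ → V → ℝ := fun t u => g ((G t).neighborSet u)
  obtain ⟨M, hM_freq, hM_le⟩ := exists_frequently_eq_and_eventually_le (Set.finite_range g)
    (a := a) (fun t u => ⟨_, rfl⟩) (P := fun t u => ∃ x, (G t).Adj u x ∧ ¬(G (t + 1)).Adj u x)
    ((frequently_fall_of_not_eventuallyConst h₀).mono fun t ht => ⟨u₀, v₀, ht⟩)
  obtain ⟨T, hT⟩ := eventually_atTop.1 (hM_le.and (eventually_not_eventuallyConst_of_adj_change G))
  obtain ⟨r, hTr, u, ⟨y, hadj, hnadj⟩, hu⟩ := frequently_atTop.1 hM_freq T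
  have hfM : f (a r y) M < α := hu ▸ hfall r y u hadj.symm fun h => hnadj h.symm
  have no_rise : ∀ t, r ≤ t → a t y ≤ a r y → ∀ z, (G (t + 1)).Adj y z → (G t).Adj y z := by
    intro t hrt hty z hz
    by_contra hnz
    have hTt : T ≤ t := hTr.trans hrt
    obtain ⟨s, hts, hs, hns⟩ := frequently_atTop.1 (frequently_fall_of_not_eventuallyConst
      ((hT t hTt).2 y z fun h => hnz (h.1 hz))) t
    have hz_le : a t z ≤ M := le_of_forall_fall_le G hg
      (fun t ht z x h h' => (hT t ht).1 z ⟨x, h, h'⟩) hs.symm (fun h => hns h.symm) hTt hts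
    have := (hrise t y z hnz hz).trans (hf _ _ _ _ hty hz_le)
    linarith
  have stays_low : ∀ t, r ≤ t → a t y ≤ a r y := by
    intro t hrt
    induction t, hrt using Nat.le_induction with
    | base => exact le_rfl
    | succ t hrt ih => exact (hg fun z => no_rise t hrt ih z).trans ih
  obtain ⟨t, hrt, hnot, hyes⟩ := frequently_atTop.1 (frequently_rise_of_not_eventuallyConst
    ((hT r hTr).2 y u fun h => hnadj (h.2 hadj.symm).symm)) r
  exact hnot (no_rise t hrt (stays_low t hrt) u hyes)

end SimpleGraph

theorem thresholdDynamics_stabilizes_general {V : Type*} [Fintype V]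
    (f : ℝ → ℝ → ℝ)
    (hfmono : ∀ x₁ x₂ y₁ y₂ : ℝ, x₁ ≤ x₂ → y₁ ≤ y₂ → f x₁ y₁ ≤ f x₂ y₂)
    (g : Set V → ℝ)
    (hg : ∀ N N' : Set V, N ⊆ N' → g N ≤ g N')
    (α β : ℝ) (hαβ : α ≤ β)
    (G : ℕ → SimpleGraph V) (C : ℕ → Set (Sym2 V))
    (hdel : ∀ t : ℕ, ∀ u v : V, s(u, v) ∈ C t →
      f (g ((G t).neighborSet u)) (g ((G t).neighborSet v)) < α →
      ¬ (G (t + 1)).Adj u v)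
    (hkeep : ∀ t : ℕ, ∀ u v : V, s(u, v) ∈ C t →
      α ≤ f (g ((G t).neighborSet u)) (g ((G t).neighborSet v)) →
      f (g ((G t).neighborSet u)) (g ((G t).neighborSet v)) < β →
      ((G (t + 1)).Adj u v ↔ (G t).Adj u v))
    (hadd : ∀ t : ℕ, ∀ u v : V, s(u, v) ∈ C t →
      β ≤ f (g ((G t).neighborSet u)) (g ((G t).neighborSet v)) →
      (G (t + 1)).Adj u v)
    (hstay : ∀ t : ℕ, ∀ u v : V, s(u, v) ∉ C t →
      ((G (t + 1)).Adj u v ↔ (G t).Adj u v)) :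
    ∃ t : ℕ, ∀ t' ≥ t, G t' = G t := by
  have hfall : ∀ t u v, (G t).Adj u v → ¬(G (t + 1)).Adj u v →
      f (g ((G t).neighborSet u)) (g ((G t).neighborSet v)) < α := by
    intro t u v h h'
    have hC : s(u, v) ∈ C t := by_contra fun hC => h' ((hstay t u v hC).2 h)
    by_contra! hα
    by_cases hβ : f (g ((G t).neighborSet u)) (g ((G t).neighborSet v)) < β
    · exact h' ((hkeep t u v hC hα hβ).2 h)
    · exact h' (hadd t u v hC (not_lt.1 hβ))
  have hrise : ∀ t u v, ¬(G t).Adj u v → (G (t + 1)).Adj u v →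
      β ≤ f (g ((G t).neighborSet u)) (g ((G t).neighborSet v)) := by
    intro t u v h h'
    have hC : s(u, v) ∈ C t := by_contra fun hC => h ((hstay t u v hC).1 h')
    by_contra! hβ
    by_cases hα : f (g ((G t).neighborSet u)) (g ((G t).neighborSet v)) < α
    · exact hdel t u v hC hα h'
    · exact h ((hkeep t u v hC (not_lt.1 hα) hβ).1 h')
  exact eventuallyConst_atTop.1 <|
    SimpleGraph.eventuallyConst_of_threshold G f hfmono g (fun _ _ => hg _ _) hαβ hfall hrise

/-- the (α,β)-dynamics with proper potential f, degree-like function g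
and an arbitrary fair scheduler stabilizes. -/
theorem thresholdDynamics_stabilizes {V : Type*} [Fintype V]
    (f : ℝ → ℝ → ℝ)
    (hfsym : ∀ x y, f x y = f y x)
    (hfmono : ∀ x₁ x₂ y₁ y₂ : ℝ, x₁ ≤ x₂ → y₁ ≤ y₂ → f x₁ y₁ ≤ f x₂ y₂)
    (g : Set V → ℝ)
    (hg : ∀ N N' : Set V, N ⊆ N' → g N ≤ g N')
    (α β : ℝ) (hαβ : α ≤ β)
    (G : ℕ → SimpleGraph V) (C : ℕ → Set (Sym2 V))
    (hCdistinct : ∀ t : ℕ, ∀ p ∈ C t, ¬ p.IsDiag)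
    (hfair : ∀ u v : V, u ≠ v → ∀ t : ℕ, ∃ t' ≥ t, s(u, v) ∈ C t')
    (hdel : ∀ t : ℕ, ∀ u v : V, s(u, v) ∈ C t →
      f (g ((G t).neighborSet u)) (g ((G t).neighborSet v)) < α →
      ¬ (G (t + 1)).Adj u v)
    (hkeep : ∀ t : ℕ, ∀ u v : V, s(u, v) ∈ C t →
      α ≤ f (g ((G t).neighborSet u)) (g ((G t).neighborSet v)) →
      f (g ((G t).neighborSet u)) (g ((G t).neighborSet v)) < β →
      ((G (t + 1)).Adj u v ↔ (G t).Adj u v))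
    (hadd : ∀ t : ℕ, ∀ u v : V, s(u, v) ∈ C t →
      β ≤ f (g ((G t).neighborSet u)) (g ((G t).neighborSet v)) →
      (G (t + 1)).Adj u v)
    (hstay : ∀ t : ℕ, ∀ u v : V, s(u, v) ∉ C t →
      ((G (t + 1)).Adj u v ↔ (G t).Adj u v)) :
    ∃ t : ℕ, ∀ t' ≥ t, G t' = G t :=
  thresholdDynamics_stabilizes_general f hfmono g hg α β hαβ G C hdel hkeep hadd hstay
end
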